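/- Minimality of the compact representation: any strict subset of s_t^min ∪ θ_k^min omits a variable that is conditionally dependent on a_t given R_{t+1} and the remaining conditioning set, under faithfulness; hence s_t^min ∪ θ_k^min is the unique minimal set of state and change-factor dimensions sufficient for determining the optimal action at time t. -/
import Mathlib


/-- Nodes: state components `s_{i,t}`, actions, rewards, cumulative future
rewards `R_t`, and change-factor components `θ_j` (indexed by `κ`). -/
inductive RLNode (ι κ : Type*) where
  | st (i : ι) (t : ℕ)
  | act (t : ℕ)
  | rew (t : ℕ)
  | cum (t : ℕ)
  | th (j : κ)

/-- Edges of the unrolled DBN from the time-invariant structural masks: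
`Sedge i j` (`s_{i,t} → s_{j,t+1}`), `Redge i` (`s_{i,t} → r_{t+1}`),
`Aedge j` (`a_t → s_{j,t+1}`), `a_t → r_{t+1}`, `ThS j i` (`θ_j → s_{i,t}`),
`ThR j` (`θ_j → r_t`), and `r_u → R_v` for `v ≤ u` (`R_{t+1}` is the
cumulative future reward, a common child of all future rewards). -/
def RLEdge {ι κ : Type*} (Sedge : ι → ι → Prop) (Aedge Redge : ι → Prop)
    (ThS : κ → ι → Prop) (ThR : κ → Prop) :
    RLNode ι κ → RLNode ι κ → Prop
  | RLNode.st i t, RLNode.st j t' => t' = t + 1 ∧ Sedge i j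
  | RLNode.st i t, RLNode.rew t' => t' = t + 1 ∧ Redge i
  | RLNode.act t, RLNode.st j t' => t' = t + 1 ∧ Aedge j
  | RLNode.act t, RLNode.rew t' => t' = t + 1
  | RLNode.rew u, RLNode.cum v => v ≤ u
  | RLNode.th j, RLNode.st i _ => ThS j i
  | RLNode.th j, RLNode.rew _ => ThR j
  | _, _ => False

/-- The recursively defined compact domain-shared representation `s^min`:
`i ∈ s^min` iff `s_{i,t}` has an edge to `r_{t+1}`, or an edge to some
`s_{j,t+1}` with `j ∈ s^min`. -/
inductive SMin {ι : Type*} (Sedge : ι → ι → Prop) (Redge : ι → Prop) : ι → Prop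
  | toReward {i : ι} : Redge i → SMin Sedge Redge i
  | toState {i j : ι} : Sedge i j → SMin Sedge Redge j → SMin Sedge Redge i

/-- The compact domain-specific representation `θ^min`: components of `θ`
with an edge to the reward or to a component of `s^min`. -/
def ThetaMin {ι κ : Type*} (Sedge : ι → ι → Prop) (Redge : ι → Prop)
    (ThS : κ → ι → Prop) (ThR : κ → Prop) : Set κ :=
  {j | ThR j ∨ ∃ i, SMin Sedge Redge i ∧ ThS j i}

def Adjacent {V : Type*} (E : V → V → Prop) (a b : V) : Prop := E a b ∨ E b a

def IsWalkBetween {V : Type*} (E : V → V → Prop) (p : List V) (x y : V) : Prop :=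
  List.Chain' (Adjacent E) p ∧ p.head? = some x ∧ p.getLast? = some y

def Descendant {V : Type*} (E : V → V → Prop) (a b : V) : Prop :=
  Relation.ReflTransGen E a b

def Blocked {V : Type*} (E : V → V → Prop) (Z : Set V) (p : List V) : Prop :=
  ∃ (l₁ l₂ : List V) (i m j : V), p = l₁ ++ i :: m :: j :: l₂ ∧
    ((¬(E i m ∧ E j m) ∧ m ∈ Z) ∨
      (E i m ∧ E j m ∧ ∀ w, Descendant E m w → w ∉ Z))

def DSep {V : Type*} (E : V → V → Prop) (x y : V) (Z : Set V) : Prop :=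
  ∀ p, IsWalkBetween E p x y → Blocked E Z p

namespace CRaux
variable {ι κ : Type*} (Sedge : ι → ι → Prop) (Aedge Redge : ι → Prop)
    (ThS : κ → ι → Prop) (ThR : κ → Prop) (t : ℕ)

local notation "E" => RLEdge Sedge Aedge Redge ThS ThR

def Mset : Set (RLNode ι κ) :=
  {n | (∃ i, SMin Sedge Redge i ∧ n = RLNode.st i t) ∨
        (∃ j, j ∈ ThetaMin Sedge Redge ThS ThR ∧ n = RLNode.th j)}

def Zset : Set (RLNode ι κ) :=
  insert (RLNode.cum (t + 1)) (Mset Sedge Redge ThS ThR t)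

local notation "Z" => Zset Sedge Redge ThS ThR t

lemma easym : ∀ {x y : RLNode ι κ}, E x y → ¬ E y x := by
  intro x y h h'
  cases x <;> cases y <;> simp [RLEdge] at h h' <;> omega

lemma mem_Z_st {i : ι} {s : ℕ} : RLNode.st i s ∈ Z ↔ SMin Sedge Redge i ∧ s = t := by
  simp only [Zset, Mset, Set.mem_insert_iff, Set.mem_setOf_eq]
  constructor
  · rintro (h | ⟨i', h, h'⟩ | ⟨j, h, h'⟩)
    · exact absurd h (by simp)
    · obtain ⟨rfl, rfl⟩ := by simpa using h'
      exact ⟨h, rfl⟩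
    · exact absurd h' (by simp)
  · rintro ⟨h, rfl⟩; exact Or.inr (Or.inl ⟨i, h, rfl⟩)

lemma mem_Z_th {j : κ} : RLNode.th j ∈ Z ↔ j ∈ ThetaMin Sedge Redge ThS ThR := by
  simp [Zset, Mset, Set.mem_insert_iff, Set.mem_setOf_eq]

lemma mem_Z_cum {v : ℕ} : RLNode.cum v ∈ Z ↔ v = t + 1 := by
  simp [Zset, Mset, Set.mem_insert_iff, Set.mem_setOf_eq]

lemma rew_not_Z {u : ℕ} : RLNode.rew u ∉ Z := by
  simp [Zset, Mset, Set.mem_insert_iff, Set.mem_setOf_eq]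

lemma act_not_Z {s : ℕ} : RLNode.act s ∉ Z := by
  simp [Zset, Mset, Set.mem_insert_iff, Set.mem_setOf_eq]

end CRaux
namespace CRaux2
variable {ι κ : Type*} {Sedge : ι → ι → Prop} {Aedge Redge : ι → Prop}
    {ThS : κ → ι → Prop} {ThR : κ → Prop} {t : ℕ}

local notation "E" => RLEdge Sedge Aedge Redge ThS ThR
local notation "Z" => CRaux.Zset Sedge Redge ThS ThR t

open CRaux

lemma desc_nonSMin {i : ι} {s : ℕ} (h : ¬ SMin Sedge Redge i) {w : RLNode ι κ}
    (hd : Descendant E (RLNode.st i s) w) :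
    ∃ k s', w = RLNode.st k s' ∧ ¬ SMin Sedge Redge k := by
  induction hd with
  | refl => exact ⟨i, s, rfl, h⟩
  | tail hd he ih =>
    obtain ⟨k, s', rfl, hk⟩ := ih
    rename_i c
    cases c with
    | st j s2 =>
      have he' : s2 = s' + 1 ∧ Sedge k j := by simpa [RLEdge] using he
      exact ⟨j, s2, rfl, fun hj => hk (SMin.toState he'.2 hj)⟩
    | rew u =>
      have he' : u = s' + 1 ∧ Redge k := by simpa [RLEdge] using he
      exact absurd (SMin.toReward he'.2) hk
    | act s2 => simp [RLEdge] at he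
    | cum v2 => simp [RLEdge] at he
    | th j2 => simp [RLEdge] at he

lemma desc_cum {v : ℕ} {w : RLNode ι κ} (hd : Descendant E (RLNode.cum v) w) :
    w = RLNode.cum v := by
  induction hd with
  | refl => rfl
  | tail hd he ih =>
    rename_i c
    rw [ih] at he
    cases c <;> simp [RLEdge] at he

lemma desc_rew {u : ℕ} {w : RLNode ι κ} (hd : Descendant E (RLNode.rew u) w) :
    w = RLNode.rew u ∨ (∃ v, w = RLNode.cum v ∧ v ≤ u) := by
  induction hd with
  | refl => exact Or.inl rfl
  | tail hd he ih =>
    rename_i c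
    rcases ih with rfl | ⟨v, rfl, hv⟩
    · cases c with
      | cum v2 => exact Or.inr ⟨v2, rfl, by simpa [RLEdge] using he⟩
      | st i s => simp [RLEdge] at he
      | rew u2 => simp [RLEdge] at he
      | act s => simp [RLEdge] at he
      | th j => simp [RLEdge] at he
    · cases c <;> simp [RLEdge] at he

lemma blocked_cons {V : Type*} {E' : V → V → Prop} {Z' : Set V} {p : List V}
    (h : Blocked E' Z' p) (x : V) : Blocked E' Z' (x :: p) := by
  obtain ⟨l₁, l₂, a, m, b, rfl, hc⟩ := h
  exact ⟨x :: l₁, l₂, a, m, b, rfl, hc⟩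

end CRaux2
namespace CRaux2
variable {ι κ : Type*} {Sedge : ι → ι → Prop} {Aedge Redge : ι → Prop}
    {ThS : κ → ι → Prop} {ThR : κ → Prop} {t : ℕ}

lemma children_st {i : ι} {s : ℕ} {x : RLNode ι κ} (h : RLEdge Sedge Aedge Redge ThS ThR (RLNode.st i s) x) :
    (∃ j, x = RLNode.st j (s+1) ∧ Sedge i j) ∨ (x = RLNode.rew (s+1) ∧ Redge i) := by
  cases x with
  | st j s2 =>
    obtain ⟨rfl, hS⟩ : s2 = s + 1 ∧ Sedge i j := by simpa [RLEdge] using h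
    exact Or.inl ⟨j, rfl, hS⟩
  | rew u =>
    obtain ⟨rfl, hR⟩ : u = s + 1 ∧ Redge i := by simpa [RLEdge] using h
    exact Or.inr ⟨rfl, hR⟩
  | act s2 => simp [RLEdge] at h
  | cum v => simp [RLEdge] at h
  | th j => simp [RLEdge] at h

lemma parents_st {i : ι} {s : ℕ} {x : RLNode ι κ} (h : RLEdge Sedge Aedge Redge ThS ThR x (RLNode.st i s)) :
    (∃ k s2, x = RLNode.st k s2 ∧ s = s2 + 1 ∧ Sedge k i) ∨
    (∃ s2, x = RLNode.act s2 ∧ s = s2 + 1 ∧ Aedge i) ∨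
    (∃ j, x = RLNode.th j ∧ ThS j i) := by
  cases x with
  | st k s2 =>
    obtain ⟨hs, hS⟩ : s = s2 + 1 ∧ Sedge k i := by simpa [RLEdge] using h
    exact Or.inl ⟨k, s2, rfl, hs, hS⟩
  | act s2 =>
    obtain ⟨hs, hA⟩ : s = s2 + 1 ∧ Aedge i := by simpa [RLEdge] using h
    exact Or.inr (Or.inl ⟨s2, rfl, hs, hA⟩)
  | th j => exact Or.inr (Or.inr ⟨j, rfl, by simpa [RLEdge] using h⟩)
  | rew u => simp [RLEdge] at h
  | cum v => simp [RLEdge] at h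

lemma children_act {s : ℕ} {x : RLNode ι κ} (h : RLEdge Sedge Aedge Redge ThS ThR (RLNode.act s) x) :
    (∃ j, x = RLNode.st j (s+1) ∧ Aedge j) ∨ x = RLNode.rew (s+1) := by
  cases x with
  | st j s2 =>
    obtain ⟨rfl, hA⟩ : s2 = s + 1 ∧ Aedge j := by simpa [RLEdge] using h
    exact Or.inl ⟨j, rfl, hA⟩
  | rew u =>
    have : u = s + 1 := by simpa [RLEdge] using h
    exact Or.inr (by rw [this])
  | act s2 => simp [RLEdge] at h
  | cum v => simp [RLEdge] at h
  | th j => simp [RLEdge] at h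

lemma children_th {j : κ} {x : RLNode ι κ} (h : RLEdge Sedge Aedge Redge ThS ThR (RLNode.th j) x) :
    (∃ i s, x = RLNode.st i s ∧ ThS j i) ∨ (∃ u, x = RLNode.rew u ∧ ThR j) := by
  cases x with
  | st i s => exact Or.inl ⟨i, s, rfl, by simpa [RLEdge] using h⟩
  | rew u => exact Or.inr ⟨u, rfl, by simpa [RLEdge] using h⟩
  | act s2 => simp [RLEdge] at h
  | cum v => simp [RLEdge] at h
  | th j2 => simp [RLEdge] at h

lemma children_rew {u : ℕ} {x : RLNode ι κ} (h : RLEdge Sedge Aedge Redge ThS ThR (RLNode.rew u) x) :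
    ∃ v, x = RLNode.cum v ∧ v ≤ u := by
  cases x <;> simp [RLEdge] at h
  exact ⟨_, rfl, h⟩

lemma no_in_act {s : ℕ} {x : RLNode ι κ} (h : RLEdge Sedge Aedge Redge ThS ThR x (RLNode.act s)) : False := by
  cases x <;> simp [RLEdge] at h

lemma no_in_th {j : κ} {x : RLNode ι κ} (h : RLEdge Sedge Aedge Redge ThS ThR x (RLNode.th j)) : False := by
  cases x <;> simp [RLEdge] at h

lemma no_out_cum {v : ℕ} {x : RLNode ι κ} (h : RLEdge Sedge Aedge Redge ThS ThR (RLNode.cum v) x) : False := by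
  cases x <;> simp [RLEdge] at h

end CRaux2
namespace CRaux2
variable {ι κ : Type*} {Sedge : ι → ι → Prop} {Aedge Redge : ι → Prop}
    {ThS : κ → ι → Prop} {ThR : κ → Prop} {t : ℕ}

local notation "E" => RLEdge Sedge Aedge Redge ThS ThR
local notation "Z" => CRaux.Zset Sedge Redge ThS ThR t

open CRaux

lemma desc_rew_notZ {u : ℕ} (hu : u ≤ t) {w : RLNode ι κ}
    (hd : Descendant E (RLNode.rew u) w) : w ∉ Z := by
  rcases desc_rew hd with rfl | ⟨v, rfl, hv⟩
  · exact rew_not_Z _ _ _ _ _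
  · rw [mem_Z_cum]; omega

lemma main_blocked (q : List (RLNode ι κ)) :
    ∀ (prev cur : RLNode ι κ),
      List.Chain' (Adjacent E) (cur :: q) →
      (cur :: q).getLast? = some (RLNode.act t) →
      ((∃ i s, cur = RLNode.st i s ∧ ¬ SMin Sedge Redge i ∧ E prev cur) ∨
       (∃ i s, cur = RLNode.st i s ∧ SMin Sedge Redge i ∧ s ≤ t ∧ E prev cur) ∨
       (∃ i s, cur = RLNode.st i s ∧ s ≤ t ∧ E cur prev) ∨
       (∃ s, cur = RLNode.act s ∧ s < t) ∨
       (∃ j, cur = RLNode.th j) ∨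
       (∃ u, cur = RLNode.rew u ∧ u ≤ t ∧ E prev cur)) →
      Blocked E Z (prev :: cur :: q) := by
  induction q with
  | nil =>
    intro prev cur _ hlast hmode
    simp only [List.getLast?_singleton, Option.some.injEq] at hlast
    subst hlast
    rcases hmode with ⟨i,s,h,-⟩|⟨i,s,h,-⟩|⟨i,s,h,-⟩|⟨s,h,hs⟩|⟨j,h⟩|⟨u,h,-⟩
    · simp at h
    · simp at h
    · simp at h
    · injection h with h; omega
    · simp at h
    · simp at h
  | cons next q ih =>
    intro prev cur hchain hlast hmode
    have hadj : Adjacent E cur next := (List.isChain_cons_cons.mp hchain).1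
    have hchain' : List.Chain' (Adjacent E) (next :: q) := (List.isChain_cons_cons.mp hchain).2
    have hlast' : (next :: q).getLast? = some (RLNode.act t) := by
      simpa using hlast
    rcases hmode with ⟨i,s,rfl,hnS,hpc⟩|⟨i,s,rfl,hS,hst,hpc⟩|⟨i,s,rfl,hst,hcp⟩|⟨s,rfl,hst⟩|⟨j,rfl⟩|⟨u,rfl,hut,hpc⟩
    · -- F: non-SMin state, forward arrival
      by_cases hcol : E next (RLNode.st i s)
      · refine ⟨[], q, prev, RLNode.st i s, next, rfl, Or.inr ⟨hpc, hcol, ?_⟩⟩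
        intro w hw hwZ
        obtain ⟨k, s', rfl, hk⟩ := desc_nonSMin hnS hw
        exact hk ((mem_Z_st _ _ _ _ _).mp hwZ).1
      · have hcn : E (RLNode.st i s) next := by
          rcases hadj with h | h
          · exact h
          · exact absurd h hcol
        rcases children_st hcn with ⟨j2, rfl, hSe⟩ | ⟨rfl, hR⟩
        · exact blocked_cons (ih (RLNode.st i s) (RLNode.st j2 (s+1)) hchain' hlast'
            (Or.inl ⟨j2, s+1, rfl, fun hj => hnS (SMin.toState hSe hj), hcn⟩)) prev
        · exact absurd (SMin.toReward hR) hnS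
    · -- SF: SMin state, s ≤ t, forward arrival
      by_cases hcol : E next (RLNode.st i s)
      · by_cases hdes : ∃ w, Descendant E (RLNode.st i s) w ∧ w ∈ Z
        · rcases parents_st hcol with ⟨k, s2, rfl, hs2, hSe⟩ | ⟨s2, rfl, hs2, hA⟩ | ⟨j2, rfl, hTS⟩
          · exact blocked_cons (ih _ _ hchain' hlast'
              (Or.inr (Or.inr (Or.inl ⟨k, s2, rfl, by omega, hcol⟩)))) prev
          · exact blocked_cons (ih _ _ hchain' hlast'
              (Or.inr (Or.inr (Or.inr (Or.inl ⟨s2, rfl, by omega⟩))))) prev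
          · exact blocked_cons (ih _ _ hchain' hlast'
              (Or.inr (Or.inr (Or.inr (Or.inr (Or.inl ⟨j2, rfl⟩)))))) prev
        · exact ⟨[], q, prev, RLNode.st i s, next, rfl,
            Or.inr ⟨hpc, hcol, fun w hw hz => hdes ⟨w, hw, hz⟩⟩⟩
      · have hcn : E (RLNode.st i s) next := by
          rcases hadj with h | h
          · exact h
          · exact absurd h hcol
        by_cases hseq : s = t
        · exact ⟨[], q, prev, RLNode.st i s, next, rfl,
            Or.inl ⟨fun hh => hcol hh.2, (mem_Z_st _ _ _ _ _).mpr ⟨hS, hseq⟩⟩⟩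
        · rcases children_st hcn with ⟨j2, rfl, hSe⟩ | ⟨rfl, hR⟩
          · by_cases hSj : SMin Sedge Redge j2
            · exact blocked_cons (ih _ _ hchain' hlast'
                (Or.inr (Or.inl ⟨j2, s+1, rfl, hSj, by omega, hcn⟩))) prev
            · exact blocked_cons (ih _ _ hchain' hlast' (Or.inl ⟨j2, s+1, rfl, hSj, hcn⟩)) prev
          · exact blocked_cons (ih _ _ hchain' hlast'
              (Or.inr (Or.inr (Or.inr (Or.inr (Or.inr ⟨s+1, rfl, by omega, hcn⟩)))))) prev
    · -- PB: state, s ≤ t, backward arrival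
      have hnpc : ¬ E prev (RLNode.st i s) := easym _ _ _ _ _ hcp
      by_cases hSi : SMin Sedge Redge i ∧ s = t
      · exact ⟨[], q, prev, RLNode.st i s, next, rfl,
          Or.inl ⟨fun hh => hnpc hh.1, (mem_Z_st _ _ _ _ _).mpr hSi⟩⟩
      · rcases hadj with hcn | hnc
        · rcases children_st hcn with ⟨j2, rfl, hSe⟩ | ⟨rfl, hR⟩
          · by_cases hSj : SMin Sedge Redge j2
            · have hs' : s < t := by
                cases Nat.lt_or_ge s t with
                | inl h => exact h
                | inr h => exact absurd ⟨SMin.toState hSe hSj, le_antisymm hst h⟩ hSi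
              exact blocked_cons (ih _ _ hchain' hlast'
                (Or.inr (Or.inl ⟨j2, s+1, rfl, hSj, by omega, hcn⟩))) prev
            · exact blocked_cons (ih _ _ hchain' hlast' (Or.inl ⟨j2, s+1, rfl, hSj, hcn⟩)) prev
          · have hs' : s < t := by
              cases Nat.lt_or_ge s t with
              | inl h => exact h
              | inr h => exact absurd ⟨SMin.toReward hR, le_antisymm hst h⟩ hSi
            exact blocked_cons (ih _ _ hchain' hlast'
              (Or.inr (Or.inr (Or.inr (Or.inr (Or.inr ⟨s+1, rfl, by omega, hcn⟩)))))) prev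
        · rcases parents_st hnc with ⟨k, s2, rfl, hs2, hSe⟩ | ⟨s2, rfl, hs2, hA⟩ | ⟨j2, rfl, hTS⟩
          · exact blocked_cons (ih _ _ hchain' hlast'
              (Or.inr (Or.inr (Or.inl ⟨k, s2, rfl, by omega, hnc⟩)))) prev
          · exact blocked_cons (ih _ _ hchain' hlast'
              (Or.inr (Or.inr (Or.inr (Or.inl ⟨s2, rfl, by omega⟩))))) prev
          · exact blocked_cons (ih _ _ hchain' hlast'
              (Or.inr (Or.inr (Or.inr (Or.inr (Or.inl ⟨j2, rfl⟩)))))) prev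
    · -- PA: act s, s < t
      have hcn : E (RLNode.act s) next := by
        rcases hadj with h | h
        · exact h
        · exact (no_in_act h).elim
      rcases children_act hcn with ⟨j2, rfl, hA⟩ | rfl
      · by_cases hSj : SMin Sedge Redge j2
        · exact blocked_cons (ih _ _ hchain' hlast'
            (Or.inr (Or.inl ⟨j2, s+1, rfl, hSj, by omega, hcn⟩))) prev
        · exact blocked_cons (ih _ _ hchain' hlast' (Or.inl ⟨j2, s+1, rfl, hSj, hcn⟩)) prev
      · exact blocked_cons (ih _ _ hchain' hlast'
          (Or.inr (Or.inr (Or.inr (Or.inr (Or.inr ⟨s+1, rfl, by omega, hcn⟩)))))) prev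
    · -- PT: theta node
      by_cases hTm : j ∈ ThetaMin Sedge Redge ThS ThR
      · exact ⟨[], q, prev, RLNode.th j, next, rfl,
          Or.inl ⟨fun hh => no_in_th hh.1, (mem_Z_th _ _ _ _ _).mpr hTm⟩⟩
      · have hcn : E (RLNode.th j) next := by
          rcases hadj with h | h
          · exact h
          · exact (no_in_th h).elim
        rcases children_th hcn with ⟨i2, s2, rfl, hTS⟩ | ⟨u2, rfl, hTR⟩
        · have hnS : ¬ SMin Sedge Redge i2 := fun h => hTm (Or.inr ⟨i2, h, hTS⟩)
          exact blocked_cons (ih _ _ hchain' hlast' (Or.inl ⟨i2, s2, rfl, hnS, hcn⟩)) prev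
        · exact absurd (Or.inl hTR) hTm
    · -- RD: reward, u ≤ t, forward arrival
      by_cases hcol : E next (RLNode.rew u)
      · exact ⟨[], q, prev, RLNode.rew u, next, rfl,
          Or.inr ⟨hpc, hcol, fun w hw => desc_rew_notZ hut hw⟩⟩
      · have hcn : E (RLNode.rew u) next := by
          rcases hadj with h | h
          · exact h
          · exact absurd h hcol
        obtain ⟨v, rfl, hv⟩ := children_rew hcn
        cases q with
        | nil => simp at hlast'
        | cons n2 q2 =>
          have hadj2 : Adjacent E (RLNode.cum v) n2 := (List.isChain_cons_cons.mp hchain').1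
          have h2 : E n2 (RLNode.cum v) := by
            rcases hadj2 with h | h
            · exact (no_out_cum h).elim
            · exact h
          refine ⟨[prev], q2, RLNode.rew u, RLNode.cum v, n2, rfl, Or.inr ⟨hcn, h2, ?_⟩⟩
          intro w hw hz
          rw [desc_cum hw, mem_Z_cum] at hz
          omega

end CRaux2
namespace CRaux2
variable {ι κ : Type*} {Sedge : ι → ι → Prop} {Aedge Redge : ι → Prop}
    {ThS : κ → ι → Prop} {ThR : κ → Prop} {t : ℕ}

local notation "E" => RLEdge Sedge Aedge Redge ThS ThR

open CRaux

lemma smin_path {i : ι} (hi : SMin Sedge Redge i) :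
    ∀ s : ℕ, ∃ (d : List (RLNode ι κ)) (u : ℕ),
      List.Chain' E (RLNode.st i s :: d) ∧
      (RLNode.st i s :: d).getLast? = some (RLNode.rew u) ∧ s + 1 ≤ u ∧
      ∀ x ∈ d, (∃ k s', x = RLNode.st k s' ∧ s + 1 ≤ s') ∨ ∃ u', x = RLNode.rew u' := by
  induction hi with
  | toReward hR =>
    rename_i i0
    intro s
    refine ⟨[RLNode.rew (s+1)], s+1, ?_, by simp, le_refl _, ?_⟩
    · exact List.isChain_cons_cons.mpr ⟨by simp [RLEdge, hR], by simp⟩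
    · intro x hx
      simp only [List.mem_singleton] at hx
      exact Or.inr ⟨s+1, hx⟩
  | toState hSe hj ihj =>
    rename_i i0 j0
    intro s
    obtain ⟨d, u, h1, h2, h3, h4⟩ := ihj (s+1)
    refine ⟨RLNode.st j0 (s+1) :: d, u, ?_, ?_, by omega, ?_⟩
    · exact List.isChain_cons_cons.mpr ⟨by simp [RLEdge, hSe], h1⟩
    · rw [List.getLast?_cons_cons]; exact h2
    · intro x hx
      rcases List.mem_cons.mp hx with rfl | hx'
      · exact Or.inl ⟨j0, s+1, rfl, le_refl _⟩
      · rcases h4 x hx' with ⟨k, s', rfl, hs'⟩ | h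
        · exact Or.inl ⟨k, s', rfl, by omega⟩
        · exact Or.inr h

lemma walk_assemble {d : List (RLNode ι κ)} {u : ℕ} {v : RLNode ι κ}
    (hch : List.Chain' E d) (hlast : d.getLast? = some (RLNode.rew u))
    (hu : t + 1 ≤ u) (hhead : d.head? = some v) :
    IsWalkBetween E (d ++ [RLNode.cum (t+1), RLNode.rew (t+1), RLNode.act t]) v (RLNode.act t) := by
  have hne : d ≠ [] := by rintro rfl; simp at hhead
  refine ⟨?_, ?_, ?_⟩
  · refine List.IsChain.append (hch.imp fun a b h => Or.inl h) ?_ ?_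
    · refine List.isChain_cons_cons.mpr ⟨Or.inr (by simp [RLEdge]), List.isChain_cons_cons.mpr ⟨Or.inr (by simp [RLEdge]), by simp⟩⟩
    · intro x hx y hy
      simp only [List.head?_cons, Option.mem_def, Option.some.injEq] at hy
      rw [hlast] at hx
      simp only [Option.mem_def, Option.some.injEq] at hx
      subst hx; subst hy
      exact Or.inl (by simp [RLEdge]; omega)
  · rw [List.head?_append_of_ne_nil _ hne]  -- may need adjusting
    exact hhead
  · rw [List.getLast?_append_of_ne_nil (l₁ := d) (by simp)]
    simp

end CRaux2
namespace CRaux2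
variable {ι κ : Type*} {Sedge : ι → ι → Prop} {Aedge Redge : ι → Prop}
    {ThS : κ → ι → Prop} {ThR : κ → Prop} {t : ℕ}

local notation "E" => RLEdge Sedge Aedge Redge ThS ThR

open CRaux

lemma noblock (Zw : Set (RLNode ι κ)) (hcum : RLNode.cum (t+1) ∈ Zw)
    (hrew : RLNode.rew (t+1) ∉ Zw) :
    ∀ (d : List (RLNode ι κ)) (u : ℕ), List.Chain' E d →
      (d ≠ [] → d.getLast? = some (RLNode.rew u)) → t + 1 ≤ u →
      (∀ x ∈ d, x ∉ Zw) →
      ¬ Blocked E Zw (d ++ [RLNode.cum (t+1), RLNode.rew (t+1), RLNode.act t]) := by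
  intro d
  induction d with
  | nil =>
    intro u _ _ _ _ hB
    obtain ⟨l₁, l₂, a, m, b, heq, hcond⟩ := hB
    cases l₁ with
    | nil =>
      simp only [List.nil_append, List.cons.injEq] at heq
      obtain ⟨rfl, rfl, rfl, rfl⟩ := heq
      rcases hcond with ⟨_, hm⟩ | ⟨h1, _, _⟩
      · exact hrew hm
      · simp [RLEdge] at h1
    | cons z l₁' =>
      have := congrArg List.length heq
      simp at this
      omega
  | cons x d ihd =>
    intro u hch hlastd hu hmem hB
    obtain ⟨l₁, l₂, a, m, b, heq, hcond⟩ := hB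
    cases l₁ with
    | cons z l₁' =>
      simp only [List.cons_append, List.cons.injEq] at heq
      obtain ⟨rfl, heq⟩ := heq
      refine ihd u hch.tail ?_ hu (fun y hy => hmem y (List.mem_cons_of_mem _ hy))
        ⟨l₁', l₂, a, m, b, heq, hcond⟩
      intro hne
      obtain ⟨y, d', rfl⟩ := List.exists_cons_of_ne_nil hne
      have h := hlastd (by simp)
      rwa [List.getLast?_cons_cons] at h
    | nil =>
      simp only [List.nil_append, List.cons_append, List.cons.injEq] at heq
      obtain ⟨rfl, heq⟩ := heq
      cases d with
      | nil =>
        simp only [List.nil_append, List.cons.injEq] at heq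
        obtain ⟨rfl, rfl, rfl⟩ := heq
        have hx : x = RLNode.rew u := by simpa using hlastd (by simp)
        subst hx
        rcases hcond with ⟨hn, _⟩ | ⟨_, _, hdes⟩
        · exact hn ⟨by simp [RLEdge]; omega, by simp [RLEdge]⟩
        · exact hdes (RLNode.cum (t+1)) Relation.ReflTransGen.refl hcum
      | cons y d' =>
        simp only [List.cons_append, List.cons.injEq] at heq
        obtain ⟨rfl, heq⟩ := heq
        rcases hcond with ⟨_, hm⟩ | ⟨_, h2, _⟩
        · exact hmem y (by simp) hm
        · -- b is head of d' ++ tail3 ; h2 : E b m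
          cases d' with
          | nil =>
            simp only [List.nil_append, List.cons.injEq] at heq
            obtain ⟨rfl, -⟩ := heq
            exact no_out_cum h2
          | cons w d'' =>
            simp only [List.cons_append, List.cons.injEq] at heq
            obtain ⟨rfl, -⟩ := heq
            have hyw : E y w := (List.isChain_cons_cons.mp (List.isChain_cons_cons.mp hch).2).1
            exact easym _ _ _ _ _ hyw h2

end CRaux2
namespace CRaux2
variable {ι κ : Type*} {Sedge : ι → ι → Prop} {Aedge Redge : ι → Prop}
    {ThS : κ → ι → Prop} {ThR : κ → Prop} {t : ℕ}

local notation "E" => RLEdge Sedge Aedge Redge ThS ThR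

open CRaux

lemma not_dsep (W : Set (RLNode ι κ))
    (hW : ∀ x ∈ W, (∃ i, x = RLNode.st i t) ∨ (∃ j, x = RLNode.th j))
    (v : RLNode ι κ) (hv : v ∈ CRaux.Mset Sedge Redge ThS ThR t) (hvW : v ∉ W) :
    ¬ DSep E v (RLNode.act t) (insert (RLNode.cum (t + 1)) W) := by
  intro hds
  have hcum : RLNode.cum (t+1) ∈ insert (RLNode.cum (t+1)) W := Set.mem_insert _ _
  have hrewW : ∀ u', RLNode.rew u' ∉ insert (RLNode.cum (t+1)) W := by
    intro u' h
    rcases Set.mem_insert_iff.mp h with h | h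
    · simp at h
    · rcases hW _ h with ⟨i, h'⟩ | ⟨j, h'⟩ <;> simp at h'
  have hstW : ∀ (k : ι) (s' : ℕ), t + 1 ≤ s' →
      RLNode.st k s' ∉ insert (RLNode.cum (t+1)) W := by
    intro k s' hs' h
    rcases Set.mem_insert_iff.mp h with h | h
    · simp at h
    · rcases hW _ h with ⟨i, h'⟩ | ⟨j, h'⟩
      · obtain ⟨-, h''⟩ : k = i ∧ s' = t := by simpa using h'
        omega
      · simp at h'
  have hvins : v ∉ insert (RLNode.cum (t+1)) W := by
    intro h
    rcases Set.mem_insert_iff.mp h with h | h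
    · rcases hv with ⟨i, _, rfl⟩ | ⟨j, _, rfl⟩ <;> simp at h
    · exact hvW h
  rcases hv with ⟨i, hSi, rfl⟩ | ⟨j, hTj, rfl⟩
  · obtain ⟨d, u, h1, h2, h3, h4⟩ := smin_path (κ := κ) (Aedge := Aedge) (ThS := ThS) (ThR := ThR) hSi t
    have hmem : ∀ x ∈ RLNode.st i t :: d, x ∉ insert (RLNode.cum (t+1)) W := by
      intro x hx
      rcases List.mem_cons.mp hx with rfl | hx'
      · exact hvins
      · rcases h4 x hx' with ⟨k, s', rfl, hs'⟩ | ⟨u', rfl⟩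
        · exact hstW k s' hs'
        · exact hrewW u'
    exact noblock _ hcum (hrewW (t+1)) (RLNode.st i t :: d) u h1 (fun _ => h2) (by omega) hmem
      (hds _ (walk_assemble h1 h2 (by omega) (by simp)))
  · rcases hTj with hTR | ⟨i, hSi, hTS⟩
    · have h1 : List.Chain' E [RLNode.th j, RLNode.rew (t+1)] :=
        List.isChain_cons_cons.mpr ⟨by simpa [RLEdge] using hTR, by simp⟩
      have h2 : ([RLNode.th j, RLNode.rew (t+1)] : List (RLNode ι κ)).getLast? =
          some (RLNode.rew (t+1)) := by simp
      have hmem : ∀ x ∈ [RLNode.th j, RLNode.rew (t+1)],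
          x ∉ insert (RLNode.cum (t+1)) W := by
        intro x hx
        rcases List.mem_cons.mp hx with rfl | hx'
        · exact hvins
        · simp only [List.mem_singleton] at hx'
          subst hx'
          exact hrewW (t+1)
      exact noblock _ hcum (hrewW (t+1)) _ (t+1) h1 (fun _ => h2) (le_refl _) hmem
        (hds _ (walk_assemble h1 h2 (le_refl _) (by simp)))
    · obtain ⟨d, u, h1, h2, h3, h4⟩ := smin_path (κ := κ) (Aedge := Aedge) (ThS := ThS) (ThR := ThR) hSi (t+1)
      have h1' : List.Chain' E (RLNode.th j :: RLNode.st i (t+1) :: d) :=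
        List.isChain_cons_cons.mpr ⟨by simpa [RLEdge] using hTS, h1⟩
      have h2' : (RLNode.th j :: RLNode.st i (t+1) :: d).getLast? = some (RLNode.rew u) := by
        rw [List.getLast?_cons_cons]; exact h2
      have hmem : ∀ x ∈ RLNode.th j :: RLNode.st i (t+1) :: d,
          x ∉ insert (RLNode.cum (t+1)) W := by
        intro x hx
        rcases List.mem_cons.mp hx with rfl | hx'
        · exact hvins
        · rcases List.mem_cons.mp hx' with rfl | hx''
          · exact hstW i (t+1) (le_refl _)
          · rcases h4 x hx'' with ⟨k, s', rfl, hs'⟩ | ⟨u', rfl⟩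
            · exact hstW k s' (by omega)
            · exact hrewW u'
      exact noblock _ hcum (hrewW (t+1)) _ u h1' (fun _ => h2') (by omega) hmem
        (hds _ (walk_assemble h1' h2' (by omega) (by simp)))

end CRaux2

/-- **minimality of the compact representation.** Let `M` be
the set of nodes `s_t^min ∪ θ_k^min` and `All` the set of all time-`t` state
components and change-factor components. Under faithfulness (conditional
independence coincides with d-separation): (1) any strict subset of `M` omits
a variable that is conditionally dependent on `a_t` given `R_{t+1}` and the
remaining conditioning set; (2) `M` is sufficient: every variable outside `M`
is conditionally independent of `a_t` given `R_{t+1}` and `M`; and (3) `M`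
is contained in every sufficient set — hence `M` is the unique minimal set of
state and change-factor dimensions sufficient for determining the optimal
action at time `t`. -/
theorem compact_representation_minimal_and_sufficient
    {ι κ : Type*} (Sedge : ι → ι → Prop) (Aedge Redge : ι → Prop)
    (ThS : κ → ι → Prop) (ThR : κ → Prop)
    (CI : RLNode ι κ → RLNode ι κ → Set (RLNode ι κ) → Prop)
    (faithful : ∀ x y Z, CI x y Z ↔
      DSep (RLEdge Sedge Aedge Redge ThS ThR) x y Z)
    (t : ℕ) :
    let All : Set (RLNode ι κ) :=
      {n | (∃ i, n = RLNode.st i t) ∨ (∃ j, n = RLNode.th j)}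
    let M : Set (RLNode ι κ) :=
      {n | (∃ i, SMin Sedge Redge i ∧ n = RLNode.st i t) ∨
        (∃ j, j ∈ ThetaMin Sedge Redge ThS ThR ∧ n = RLNode.th j)}
    (∀ W ⊆ M, W ≠ M → ∃ v ∈ M, v ∉ W ∧
        ¬ CI v (RLNode.act t) (insert (RLNode.cum (t + 1)) W)) ∧
    (∀ v ∈ All \ M,
        CI v (RLNode.act t) (insert (RLNode.cum (t + 1)) M)) ∧
    (∀ W ⊆ All,
        (∀ v ∈ All \ W,
          CI v (RLNode.act t) (insert (RLNode.cum (t + 1)) W)) →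
        M ⊆ W) := by
  intro All M
  refine ⟨?_, ?_, ?_⟩
  · -- (1) minimality
    intro W hWM hne
    have hex : ∃ v, v ∈ M ∧ v ∉ W := by
      by_contra h
      push_neg at h
      exact hne (Set.Subset.antisymm hWM (fun v hv => h v hv))
    obtain ⟨v, hvM, hvW⟩ := hex
    refine ⟨v, hvM, hvW, ?_⟩
    rw [faithful]
    refine CRaux2.not_dsep W ?_ v hvM hvW
    intro x hx
    rcases hWM hx with ⟨i, _, rfl⟩ | ⟨j, _, rfl⟩
    · exact Or.inl ⟨i, rfl⟩
    · exact Or.inr ⟨j, rfl⟩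
  · -- (2) sufficiency
    intro v hv
    rw [faithful]
    intro p hp
    obtain ⟨hc, hh, hl⟩ := hp
    cases p with
    | nil => simp at hh
    | cons a rest =>
      have ha : a = v := by simpa using hh
      subst ha
      cases rest with
      | nil =>
        have : a = RLNode.act t := by simpa using hl
        rcases hv.1 with ⟨i, rfl⟩ | ⟨j, rfl⟩ <;> simp at this
      | cons x q =>
        have hadj0 := (List.isChain_cons_cons.mp hc).1
        have hch := (List.isChain_cons_cons.mp hc).2
        have hl' : (x :: q).getLast? = some (RLNode.act t) := by simpa using hl
        rcases hv.1 with ⟨i, rfl⟩ | ⟨j, rfl⟩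
        · have hnS : ¬ SMin Sedge Redge i := fun h => hv.2 (Or.inl ⟨i, h, rfl⟩)
          rcases hadj0 with hf | hb
          · rcases CRaux2.children_st hf with ⟨j2, rfl, hSe⟩ | ⟨rfl, hR⟩
            · exact CRaux2.main_blocked q _ _ hch hl'
                (Or.inl ⟨j2, t+1, rfl, fun h => hnS (SMin.toState hSe h), hf⟩)
            · exact absurd (SMin.toReward hR) hnS
          · rcases CRaux2.parents_st hb with ⟨k, s2, rfl, hs2, hSe⟩ | ⟨s2, rfl, hs2, hA⟩ | ⟨j2, rfl, hTS⟩
            · exact CRaux2.main_blocked q _ _ hch hl'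
                (Or.inr (Or.inr (Or.inl ⟨k, s2, rfl, by omega, hb⟩)))
            · exact CRaux2.main_blocked q _ _ hch hl'
                (Or.inr (Or.inr (Or.inr (Or.inl ⟨s2, rfl, by omega⟩))))
            · exact CRaux2.main_blocked q _ _ hch hl'
                (Or.inr (Or.inr (Or.inr (Or.inr (Or.inl ⟨j2, rfl⟩)))))
        · have hnT : j ∉ ThetaMin Sedge Redge ThS ThR :=
            fun h => hv.2 (Or.inr ⟨j, h, rfl⟩)
          rcases hadj0 with hf | hb
          · rcases CRaux2.children_th hf with ⟨i2, s2, rfl, hTS⟩ | ⟨u2, rfl, hTR⟩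
            · exact CRaux2.main_blocked q _ _ hch hl'
                (Or.inl ⟨i2, s2, rfl, fun h => hnT (Or.inr ⟨i2, h, hTS⟩), hf⟩)
            · exact absurd (Or.inl hTR) hnT
          · exact (CRaux2.no_in_th hb).elim
  · -- (3) M is contained in every sufficient set
    intro W hWAll hsuff v hvM
    by_contra hvW
    have hvAll : v ∈ All := by
      rcases hvM with ⟨i, _, rfl⟩ | ⟨j, _, rfl⟩
      · exact Or.inl ⟨i, rfl⟩
      · exact Or.inr ⟨j, rfl⟩
    have hds := (faithful _ _ _).mp (hsuff v ⟨hvAll, hvW⟩)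
    refine CRaux2.not_dsep W ?_ v hvM hvW hds
    intro x hx
    exact hWAll hx
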